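/- Let n be a positive integer and let S : Mₙ(ℂ)³ → ℂ be the function S(x,y,z) = Tr([x,y]·z). A point (x,y,z) ∈ Mₙ(ℂ)³ is a critical point of S (i.e. the Fréchet derivative of S at (x,y,z) is the zero linear map) if and only if the three commutators vanish: [x,y] = [y,z] = [z,x] = 0. -/

import Mathlib

attribute [local instance] Matrix.linftyOpNormedAddCommGroup Matrix.linftyOpNormedRing
  Matrix.linftyOpNormedAlgebra

/-!
The derivative of `S` at `(x, y, z)` in the direction `(a, b, c)` is
`Tr([a, y] z) + Tr([x, b] z) + Tr([x, y] c)`, which cyclicity of the trace turns into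
`Tr(a [y, z]) + Tr(b [z, x]) + Tr(c [x, y])`. The trace pairing `(u, M) ↦ Tr(u M)` is
nondegenerate, so this vanishes in every direction exactly when the three commutators vanish.
-/

open Matrix

namespace Matrix

variable {m R : Type*} [Fintype m]

theorem trace_commutator_mul [CommRing R] (a b c : Matrix m m R) :
    ((a * b - b * a) * c).trace = (a * (b * c - c * b)).trace := by
  rw [sub_mul, mul_sub, trace_sub, trace_sub, Matrix.mul_assoc, Matrix.mul_assoc,
    trace_mul_comm b, Matrix.mul_assoc]

theorem trace_commutator_mul' [CommRing R] (a b c : Matrix m m R) :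
    ((a * b - b * a) * c).trace = (b * (c * a - a * c)).trace := by
  rw [sub_mul, mul_sub, trace_sub, trace_sub, Matrix.mul_assoc, trace_mul_comm a,
    Matrix.mul_assoc, Matrix.mul_assoc]

theorem forall_trace_mul_add_trace_mul_add_trace_mul_eq_zero_iff [NonAssocSemiring R]
    (P Q S : Matrix m m R) :
    (∀ a b c : Matrix m m R, (a * P).trace + (b * Q).trace + (c * S).trace = 0) ↔
      P = 0 ∧ Q = 0 ∧ S = 0 := by
  have eq_zero_iff : ∀ M : Matrix m m R, M = 0 ↔ ∀ a, (a * M).trace = 0 := fun M => by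
    simp [ext_iff_trace_mul_left (B := 0)]
  refine ⟨fun h => ⟨?_, ?_, ?_⟩, ?_⟩
  · exact (eq_zero_iff P).2 fun a => by simpa using h a 0 0
  · exact (eq_zero_iff Q).2 fun b => by simpa using h 0 b 0
  · exact (eq_zero_iff S).2 fun c => by simpa using h 0 0 c
  · rintro ⟨rfl, rfl, rfl⟩ a b c
    simp

end Matrix

def cubicPotential {m R : Type*} [Fintype m] [Ring R]
    (p : Matrix m m R × Matrix m m R × Matrix m m R) : R :=
  ((p.1 * p.2.1 - p.2.1 * p.1) * p.2.2).trace

theorem fderiv_cubicPotential_apply {𝕜 m : Type*} [NontriviallyNormedField 𝕜] [Fintype m]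
    (x y z a b c : Matrix m m 𝕜) :
    fderiv 𝕜 cubicPotential (x, y, z) (a, b, c) =
      (a * (y * z - z * y)).trace + (b * (z * x - x * z)).trace +
        (c * (x * y - y * x)).trace := by
  -- `HasFDerivAt.mul'` uses `Matrix.linftyOpNormedRing`, which needs `DecidableEq m`
  classical
  let traceCLM : Matrix m m 𝕜 →L[𝕜] 𝕜 :=
    ⟨traceLinearMap m 𝕜 𝕜, continuous_id.matrix_trace⟩
  have hx := hasFDerivAt_fst (𝕜 := 𝕜) (p := (x, y, z))
  have hy := (hasFDerivAt_snd (𝕜 := 𝕜) (p := (x, y, z))).fst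
  have hz := (hasFDerivAt_snd (𝕜 := 𝕜) (p := (x, y, z))).snd
  have hderiv := traceCLM.hasFDerivAt.comp (x, y, z) (((hx.mul' hy).sub (hy.mul' hx)).mul' hz)
  rw [(show HasFDerivAt cubicPotential _ (x, y, z) from hderiv).fderiv]
  change ((x * y - y * x) * c + (x * b + a * y - (y * a + b * x)) * z).trace = _
  rw [show x * b + a * y - (y * a + b * x) = (a * y - y * a) + (x * b - b * x) by abel,
    add_mul, trace_add, trace_add, trace_commutator_mul a y z, trace_commutator_mul' x b z,
    trace_mul_comm (x * y - y * x) c]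
  ring

theorem critical_point_iff_commuting_triple_general (n : ℕ)
    (S : Matrix (Fin n) (Fin n) ℂ × Matrix (Fin n) (Fin n) ℂ × Matrix (Fin n) (Fin n) ℂ → ℂ)
    (hS : ∀ p, S p = ((p.1 * p.2.1 - p.2.1 * p.1) * p.2.2).trace)
    (x y z : Matrix (Fin n) (Fin n) ℂ) :
    fderiv ℂ S (x, y, z) = 0 ↔
      x * y - y * x = 0 ∧ y * z - z * y = 0 ∧ z * x - x * z = 0 := by
  obtain rfl : S = cubicPotential := funext hS
  rw [ContinuousLinearMap.ext_iff]
  simp only [Prod.forall, fderiv_cubicPotential_apply, _root_.zero_apply,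
    forall_trace_mul_add_trace_mul_add_trace_mul_eq_zero_iff]
  tauto

/-- A point `(x,y,z)` is a critical point of the cubic potential `S(x,y,z) = Tr([x,y]·z)`
(meaning its Fréchet derivative vanishes there) if and only if the three commutators
`[x,y]`, `[y,z]` and `[z,x]` all vanish. -/
theorem critical_point_iff_commuting_triple (n : ℕ) (hn : 0 < n)
    (S : Matrix (Fin n) (Fin n) ℂ × Matrix (Fin n) (Fin n) ℂ × Matrix (Fin n) (Fin n) ℂ → ℂ)
    (hS : ∀ p, S p = ((p.1 * p.2.1 - p.2.1 * p.1) * p.2.2).trace)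
    (x y z : Matrix (Fin n) (Fin n) ℂ) :
    fderiv ℂ S (x, y, z) = 0 ↔
      x * y - y * x = 0 ∧ y * z - z * y = 0 ∧ z * x - x * z = 0 :=
  critical_point_iff_commuting_triple_general n S hS x y z
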